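/- Let T > 0, let A, B ∈ ℝ^{2×2}, C ∈ ℝ², let Q ∈ ℝ^{2×2} be symmetric positive semidefinite, R ∈ ℝ^{2×2} symmetric positive definite, φ ∈ ℝ^{2×2} symmetric positive semidefinite, and L : [0,T] → ℝ² continuous. Suppose P : [0,T] → ℝ^{2×2} (symmetric-valued), Ψ : [0,T] → ℝ² and χ : [0,T] → ℝ are differentiable and satisfy: P'(t) + P(t)A + AᵀP(t) − P(t)BR⁻¹BᵀP(t) + Q = 0 with P(T) = φ; Ψ'(t) + AᵀΨ(t) + P(t)C − P(t)BR⁻¹BᵀΨ(t) + L(t) = 0 with Ψ(T) = 0; χ'(t) + Ψ(t)ᵀC − (1/2)Ψ(t)ᵀBR⁻¹BᵀΨ(t) = 0 with χ(T) = 0, and set v(X,t) = (1/2)XᵀP(t)X + Ψ(t)ᵀX + χ(t). Then for every continuous control u : [0,T] → ℝ² and every differentiable trajectory X : [0,T] → ℝ² with X'(t) = AX(t) + Bu(t) + C for all t, the cost J := ∫₀ᵀ [ (1/2)X(t)ᵀQX(t) + (1/2)u(t)ᵀRu(t) + L(t)ᵀX(t) ] dt + (1/2)X(T)ᵀφX(T)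 satisfies J ≥ v(X(0),0); moreover, equality holds if u(t) = −R⁻¹Bᵀ(P(t)X(t) + Ψ(t)) for all t ∈ [0,T]. -/

import Mathlib

/-!
Verification argument: by the Riccati equation for `P` and the adjoint equations for `Ψ` and `χ`,
along any trajectory the running cost plus the time derivative of
`v(X, t) = ½ Xᵀ P X + Ψᵀ X + χ` equals the completed square `½ wᵀ R w`, where
`w = u + R⁻¹ Bᵀ (P X + Ψ)` is the deviation from the feedback control. Integrating over `[0, T]`
and using `v(·, T) = ½ Xᵀ φ X`, the total cost is `v(X(0), 0) + ∫ ½ wᵀ R w`, which is at least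
`v(X(0), 0)` since `R` is positive definite, with equality when `w = 0`.
-/

open Matrix Set MeasureTheory

section Calculus

variable {ι κ : Type*} [Fintype ι] {𝕜 𝔸 : Type*} [NontriviallyNormedField 𝕜] [NormedRing 𝔸]
  [NormedAlgebra 𝕜 𝔸] {s : Set 𝕜} {t : 𝕜}

theorem HasDerivWithinAt.dotProduct {v w : 𝕜 → ι → 𝔸} {v' w' : ι → 𝔸}
    (hv : HasDerivWithinAt v v' s t) (hw : HasDerivWithinAt w w' s t) :
    HasDerivWithinAt (fun x => v x ⬝ᵥ w x) (v' ⬝ᵥ w t + v t ⬝ᵥ w') s t := by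
  simp only [_root_.dotProduct, ← Finset.sum_add_distrib]
  exact HasDerivWithinAt.fun_sum fun i _ =>
    (hasDerivWithinAt_pi.1 hv i).mul (hasDerivWithinAt_pi.1 hw i)

theorem HasDerivWithinAt.matrix_mulVec {M : 𝕜 → Matrix κ ι 𝔸} {M' : Matrix κ ι 𝔸}
    {v : 𝕜 → ι → 𝔸} {v' : ι → 𝔸}
    (hM : ∀ i j, HasDerivWithinAt (fun x => M x i j) (M' i j) s t)
    (hv : HasDerivWithinAt v v' s t) :
    HasDerivWithinAt (fun x => M x *ᵥ v x) (M' *ᵥ v t + M t *ᵥ v') s t :=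
  hasDerivWithinAt_pi.2 fun i => (hasDerivWithinAt_pi.2 (hM i)).dotProduct hv

end Calculus

theorem intervalIntegral.integral_add_eq_of_hasDerivWithinAt {a b : ℝ} (hab : a ≤ b)
    {V V' f g : ℝ → ℝ} (hV : ∀ t ∈ Icc a b, HasDerivWithinAt V (V' t) (Icc a b) t)
    (hf : ContinuousOn f (Icc a b)) (hg : ContinuousOn g (Icc a b))
    (hfg : ∀ t ∈ Icc a b, f t + V' t = g t) :
    (∫ t in a..b, f t) + V b = V a + ∫ t in a..b, g t := by
  have hV' : ∀ t ∈ Ioo a b, HasDerivAt V (g t - f t) t := fun t ht =>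
    ((hV t (Ioo_subset_Icc_self ht)).hasDerivAt (Icc_mem_nhds ht.1 ht.2)).congr_deriv
      (by linarith [hfg t (Ioo_subset_Icc_self ht)])
  have hFTC := integral_eq_sub_of_hasDerivAt_of_le hab
    (fun t ht => (hV t ht).continuousWithinAt) hV' ((hg.sub hf).intervalIntegrable_of_Icc hab)
  rw [integral_sub (hg.intervalIntegrable_of_Icc hab) (hf.intervalIntegrable_of_Icc hab)] at hFTC
  linarith

namespace Matrix

variable {ι κ α : Type*} [Fintype ι] [Fintype κ] [CommRing α]

theorem mulVec_dotProduct_eq_dotProduct_transpose_mulVec (M : Matrix ι κ α) (v : κ → α)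
    (w : ι → α) : M *ᵥ v ⬝ᵥ w = v ⬝ᵥ Mᵀ *ᵥ w := by
  rw [dotProduct_transpose_mulVec, dotProduct_comm]

theorem IsSymm.dotProduct_mulVec_comm {S : Matrix ι ι α} (hS : S.IsSymm) (v w : ι → α) :
    v ⬝ᵥ S *ᵥ w = w ⬝ᵥ S *ᵥ v := by
  conv_lhs => rw [← hS.eq]
  exact dotProduct_transpose_mulVec S v w

theorem IsSymm.add_inv_mulVec_dotProduct_mulVec [DecidableEq κ] {R : Matrix κ κ α}
    (hR : R.IsSymm) (hRdet : IsUnit R.det) (u v : κ → α) :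
    (u + R⁻¹ *ᵥ v) ⬝ᵥ R *ᵥ (u + R⁻¹ *ᵥ v) = u ⬝ᵥ R *ᵥ u + 2 * (u ⬝ᵥ v) + v ⬝ᵥ R⁻¹ *ᵥ v := by
  have hRv : R *ᵥ (R⁻¹ *ᵥ v) = v := by rw [mulVec_mulVec, mul_nonsing_inv R hRdet, one_mulVec]
  rw [mulVec_add, hRv, add_dotProduct, dotProduct_add, dotProduct_add,
    hR.dotProduct_mulVec_comm (R⁻¹ *ᵥ v) u, hRv, dotProduct_comm (R⁻¹ *ᵥ v) v]
  ring

end Matrix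

theorem riccati_cost_add_deriv_eq_completeSquare {ι κ : Type*} [Fintype ι] [Fintype κ]
    [DecidableEq κ] {A Q P P' : Matrix ι ι ℝ} {B : Matrix ι κ ℝ} {R : Matrix κ κ ℝ}
    {C L x ψ ψ' : ι → ℝ} {u : κ → ℝ} {χ' : ℝ}
    (hP : P.IsSymm) (hR : R.IsSymm) (hRdet : IsUnit R.det)
    (hP' : P' + P * A + Aᵀ * P - P * B * R⁻¹ * Bᵀ * P + Q = 0)
    (hψ' : ψ' + Aᵀ *ᵥ ψ + P *ᵥ C - (P * B * R⁻¹ * Bᵀ) *ᵥ ψ + L = 0)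
    (hχ' : χ' + ψ ⬝ᵥ C - (1 / 2) * (ψ ⬝ᵥ ((B * R⁻¹ * Bᵀ) *ᵥ ψ)) = 0) :
    (1 / 2) * (x ⬝ᵥ (Q *ᵥ x)) + (1 / 2) * (u ⬝ᵥ (R *ᵥ u)) + L ⬝ᵥ x +
      ((1 / 2) * ((A *ᵥ x + B *ᵥ u + C) ⬝ᵥ (P *ᵥ x) +
          x ⬝ᵥ (P' *ᵥ x + P *ᵥ (A *ᵥ x + B *ᵥ u + C))) +
        (ψ' ⬝ᵥ x + ψ ⬝ᵥ (A *ᵥ x + B *ᵥ u + C)) + χ') =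
      (1 / 2) * ((u + (R⁻¹ * Bᵀ) *ᵥ (P *ᵥ x + ψ)) ⬝ᵥ (R *ᵥ (u + (R⁻¹ * Bᵀ) *ᵥ (P *ᵥ x + ψ)))) := by
  obtain rfl : P' = P * B * R⁻¹ * Bᵀ * P - P * A - Aᵀ * P - Q :=
    eq_of_sub_eq_zero (by rw [← hP']; abel)
  obtain rfl : ψ' = (P * B * R⁻¹ * Bᵀ) *ᵥ ψ - Aᵀ *ᵥ ψ - P *ᵥ C - L :=
    eq_of_sub_eq_zero (by rw [← hψ']; abel)
  obtain rfl : χ' = 1 / 2 * (ψ ⬝ᵥ ((B * R⁻¹ * Bᵀ) *ᵥ ψ)) - ψ ⬝ᵥ C := by linarith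
  rw [← mulVec_mulVec (M := R⁻¹) (N := Bᵀ), hR.add_inv_mulVec_dotProduct_mulVec hRdet]
  have hRi : R⁻¹ᵀ = R⁻¹ := by rw [transpose_nonsing_inv, hR.eq]
  simp only [sub_mulVec, mulVec_add, dotProduct_add, add_dotProduct, dotProduct_sub,
    sub_dotProduct, ← mulVec_mulVec, mulVec_dotProduct_eq_dotProduct_transpose_mulVec,
    transpose_transpose, hP.eq, hRi]
  -- the remaining cross terms occur as both `a ⬝ᵥ M *ᵥ b` and `b ⬝ᵥ Mᵀ *ᵥ a`
  have hPBu : x ⬝ᵥ P *ᵥ B *ᵥ u = u ⬝ᵥ Bᵀ *ᵥ P *ᵥ x := by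
    rw [dotProduct_comm]
    simp only [mulVec_dotProduct_eq_dotProduct_transpose_mulVec, hP.eq]
  have hPC : x ⬝ᵥ P *ᵥ C = C ⬝ᵥ P *ᵥ x := hP.dotProduct_mulVec_comm x C
  have hPKψ : x ⬝ᵥ P *ᵥ B *ᵥ R⁻¹ *ᵥ Bᵀ *ᵥ ψ = ψ ⬝ᵥ B *ᵥ R⁻¹ *ᵥ Bᵀ *ᵥ P *ᵥ x := by
    rw [dotProduct_comm]
    simp only [mulVec_dotProduct_eq_dotProduct_transpose_mulVec, transpose_transpose, hP.eq, hRi]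
  have hBu : u ⬝ᵥ Bᵀ *ᵥ ψ = ψ ⬝ᵥ B *ᵥ u := by
    rw [dotProduct_comm]
    simp only [mulVec_dotProduct_eq_dotProduct_transpose_mulVec, transpose_transpose]
  linarith

theorem stmt_1_general
    (T : ℝ) (hT : 0 < T)
    (A B : Matrix (Fin 2) (Fin 2) ℝ) (C : Fin 2 → ℝ)
    (Q R φ : Matrix (Fin 2) (Fin 2) ℝ)
    (hR : R.PosDef)
    (L : ℝ → Fin 2 → ℝ) (hL : ContinuousOn L (Icc 0 T))
    (P P' : ℝ → Matrix (Fin 2) (Fin 2) ℝ)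
    (Ψ Ψ' : ℝ → Fin 2 → ℝ) (χ χ' : ℝ → ℝ)
    (hPsymm : ∀ t ∈ Icc (0:ℝ) T, (P t).IsSymm)
    (hPdiff : ∀ t ∈ Icc (0:ℝ) T, ∀ i j,
      HasDerivWithinAt (fun s => P s i j) (P' t i j) (Icc 0 T) t)
    (hΨdiff : ∀ t ∈ Icc (0:ℝ) T, HasDerivWithinAt Ψ (Ψ' t) (Icc 0 T) t)
    (hχdiff : ∀ t ∈ Icc (0:ℝ) T, HasDerivWithinAt χ (χ' t) (Icc 0 T) t)
    (hPeq : ∀ t ∈ Icc (0:ℝ) T,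
      P' t + P t * A + Aᵀ * P t - P t * B * R⁻¹ * Bᵀ * P t + Q = 0)
    (hPT : P T = φ)
    (hΨeq : ∀ t ∈ Icc (0:ℝ) T,
      Ψ' t + Aᵀ *ᵥ Ψ t + P t *ᵥ C - (P t * B * R⁻¹ * Bᵀ) *ᵥ Ψ t + L t = 0)
    (hΨT : Ψ T = 0)
    (hχeq : ∀ t ∈ Icc (0:ℝ) T,
      χ' t + Ψ t ⬝ᵥ C - (1 / 2) * (Ψ t ⬝ᵥ ((B * R⁻¹ * Bᵀ) *ᵥ Ψ t)) = 0)
    (hχT : χ T = 0) :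
    ∀ (u X : ℝ → Fin 2 → ℝ),
      ContinuousOn u (Icc 0 T) →
      (∀ t ∈ Icc (0:ℝ) T,
        HasDerivWithinAt X (A *ᵥ X t + B *ᵥ u t + C) (Icc 0 T) t) →
      ((1 / 2) * (X 0 ⬝ᵥ (P 0 *ᵥ X 0)) + Ψ 0 ⬝ᵥ X 0 + χ 0 ≤
          (∫ t in (0:ℝ)..T,
            ((1 / 2) * (X t ⬝ᵥ (Q *ᵥ X t)) + (1 / 2) * (u t ⬝ᵥ (R *ᵥ u t)) + L t ⬝ᵥ X t))
            + (1 / 2) * (X T ⬝ᵥ (φ *ᵥ X T))) ∧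
        ((∀ t ∈ Icc (0:ℝ) T, u t = -((R⁻¹ * Bᵀ) *ᵥ (P t *ᵥ X t + Ψ t))) →
          (∫ t in (0:ℝ)..T,
            ((1 / 2) * (X t ⬝ᵥ (Q *ᵥ X t)) + (1 / 2) * (u t ⬝ᵥ (R *ᵥ u t)) + L t ⬝ᵥ X t))
            + (1 / 2) * (X T ⬝ᵥ (φ *ᵥ X T))
            = (1 / 2) * (X 0 ⬝ᵥ (P 0 *ᵥ X 0)) + Ψ 0 ⬝ᵥ X 0 + χ 0) := by
  intro u X hu hX
  have hXc : ContinuousOn X (Icc 0 T) := fun t ht => (hX t ht).continuousWithinAt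
  have hΨc : ContinuousOn Ψ (Icc 0 T) := fun t ht => (hΨdiff t ht).continuousWithinAt
  have hPc : ContinuousOn P (Icc 0 T) := continuousOn_pi.2 fun i => continuousOn_pi.2
    fun j t ht => (hPdiff t ht i j).continuousWithinAt
  have hRsymm : R.IsSymm := (conjTranspose_eq_transpose_of_trivial R).symm.trans hR.isHermitian
  have hRdet : IsUnit R.det := (isUnit_iff_isUnit_det R).1 hR.isUnit
  set w : ℝ → Fin 2 → ℝ := fun t => u t + (R⁻¹ * Bᵀ) *ᵥ (P t *ᵥ X t + Ψ t) with hw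
  have hcost := intervalIntegral.integral_add_eq_of_hasDerivWithinAt hT.le
    (V := fun t => (1 / 2) * (X t ⬝ᵥ (P t *ᵥ X t)) + Ψ t ⬝ᵥ X t + χ t)
    (g := fun t => (1 / 2) * (w t ⬝ᵥ R *ᵥ w t))
    (fun t ht => ((((hX t ht).dotProduct (.matrix_mulVec (hPdiff t ht) (hX t ht))).const_mul _).add
      ((hΨdiff t ht).dotProduct (hX t ht))).add (hχdiff t ht))
    (by fun_prop) (by fun_prop)
    (fun t ht => riccati_cost_add_deriv_eq_completeSquare (hPsymm t ht) hRsymm hRdet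
      (hPeq t ht) (hΨeq t ht) (hχeq t ht))
  simp only [hPT, hΨT, hχT, zero_dotProduct, add_zero] at hcost
  refine ⟨?_, fun hopt => ?_⟩
  · have hgap : 0 ≤ ∫ t in (0:ℝ)..T, (1 / 2) * (w t ⬝ᵥ R *ᵥ w t) :=
      intervalIntegral.integral_nonneg hT.le fun t _ =>
        mul_nonneg (by norm_num) (hR.posSemidef.dotProduct_mulVec_nonneg (w t))
    linarith
  · have hgap : ∫ t in (0:ℝ)..T, (1 / 2) * (w t ⬝ᵥ R *ᵥ w t) = 0 := by
      rw [intervalIntegral.integral_congr (g := fun _ => 0), intervalIntegral.integral_zero]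
      intro t ht
      simp [hw, hopt t (uIcc_of_le hT.le ▸ ht)]
    linarith

theorem stmt_1
    (T : ℝ) (hT : 0 < T)
    (A B : Matrix (Fin 2) (Fin 2) ℝ) (C : Fin 2 → ℝ)
    (Q R φ : Matrix (Fin 2) (Fin 2) ℝ)
    (hQ : Q.PosSemidef) (hR : R.PosDef) (hφ : φ.PosSemidef)
    (L : ℝ → Fin 2 → ℝ) (hL : ContinuousOn L (Icc 0 T))
    (P P' : ℝ → Matrix (Fin 2) (Fin 2) ℝ)
    (Ψ Ψ' : ℝ → Fin 2 → ℝ) (χ χ' : ℝ → ℝ)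
    (hPsymm : ∀ t ∈ Icc (0:ℝ) T, (P t).IsSymm)
    (hPdiff : ∀ t ∈ Icc (0:ℝ) T, ∀ i j,
      HasDerivWithinAt (fun s => P s i j) (P' t i j) (Icc 0 T) t)
    (hΨdiff : ∀ t ∈ Icc (0:ℝ) T, HasDerivWithinAt Ψ (Ψ' t) (Icc 0 T) t)
    (hχdiff : ∀ t ∈ Icc (0:ℝ) T, HasDerivWithinAt χ (χ' t) (Icc 0 T) t)
    (hPeq : ∀ t ∈ Icc (0:ℝ) T,
      P' t + P t * A + Aᵀ * P t - P t * B * R⁻¹ * Bᵀ * P t + Q = 0)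
    (hPT : P T = φ)
    (hΨeq : ∀ t ∈ Icc (0:ℝ) T,
      Ψ' t + Aᵀ *ᵥ Ψ t + P t *ᵥ C - (P t * B * R⁻¹ * Bᵀ) *ᵥ Ψ t + L t = 0)
    (hΨT : Ψ T = 0)
    (hχeq : ∀ t ∈ Icc (0:ℝ) T,
      χ' t + Ψ t ⬝ᵥ C - (1 / 2) * (Ψ t ⬝ᵥ ((B * R⁻¹ * Bᵀ) *ᵥ Ψ t)) = 0)
    (hχT : χ T = 0) :
    ∀ (u X : ℝ → Fin 2 → ℝ),
      ContinuousOn u (Icc 0 T) →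
      (∀ t ∈ Icc (0:ℝ) T,
        HasDerivWithinAt X (A *ᵥ X t + B *ᵥ u t + C) (Icc 0 T) t) →
      ((1 / 2) * (X 0 ⬝ᵥ (P 0 *ᵥ X 0)) + Ψ 0 ⬝ᵥ X 0 + χ 0 ≤
          (∫ t in (0:ℝ)..T,
            ((1 / 2) * (X t ⬝ᵥ (Q *ᵥ X t)) + (1 / 2) * (u t ⬝ᵥ (R *ᵥ u t)) + L t ⬝ᵥ X t))
            + (1 / 2) * (X T ⬝ᵥ (φ *ᵥ X T))) ∧
        ((∀ t ∈ Icc (0:ℝ) T, u t = -((R⁻¹ * Bᵀ) *ᵥ (P t *ᵥ X t + Ψ t))) →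
          (∫ t in (0:ℝ)..T,
            ((1 / 2) * (X t ⬝ᵥ (Q *ᵥ X t)) + (1 / 2) * (u t ⬝ᵥ (R *ᵥ u t)) + L t ⬝ᵥ X t))
            + (1 / 2) * (X T ⬝ᵥ (φ *ᵥ X T))
            = (1 / 2) * (X 0 ⬝ᵥ (P 0 *ᵥ X 0)) + Ψ 0 ⬝ᵥ X 0 + χ 0) :=
  stmt_1_general T hT A B C Q R φ hR L hL P P' Ψ Ψ' χ χ' hPsymm hPdiff hΨdiff hχdiff hPeq hPT hΨeq
    hΨT hχeq hχT
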